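/- arXiv:1705.04735 — 2 statements merged into one kernel-verified Lean document; each statement's English description precedes it below -/
import Mathlib

section
/- For any graph G and any noncomplete graph H, γ_r(G∘H) ≤ γ(G)·γ_r(H). -/
open Finset
open scoped Classical

/-- The lexicographic product of two simple graphs. -/
def lexProd {α β : Type*} (G : SimpleGraph α) (H : SimpleGraph β) :
    SimpleGraph (α × β) where
  Adj p q := G.Adj p.1 q.1 ∨ (p.1 = q.1 ∧ H.Adj p.2 q.2)
  symm := by
    constructor
    rintro ⟨a, b⟩ ⟨c, d⟩ (h | ⟨h1, h2⟩)
    · exact Or.inl h.symm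
    · exact Or.inr ⟨h1.symm, h2.symm⟩
  loopless := by
    constructor
    rintro ⟨a, b⟩ (h | ⟨h1, h2⟩)
    · exact G.loopless.irrefl a h
    · exact H.loopless.irrefl b h2

/-- A vertex `w` is undefended with respect to `g` if `g w = 0` and `g x = 0`
for every neighbour `x` of `w`. -/
def Undefended {α : Type*} (G : SimpleGraph α) (g : α → ℕ) (w : α) : Prop :=
  g w = 0 ∧ ∀ x, G.Adj w x → g x = 0

/-- A weak Roman dominating function. -/
def IsWRDF {α : Type*} (G : SimpleGraph α) (f : α → ℕ) : Prop :=
  (∀ v, f v ≤ 2) ∧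
    ∀ v, f v = 0 → ∃ u, G.Adj u v ∧ 1 ≤ f u ∧
      ∀ w, ¬ Undefended G (Function.update (Function.update f v 1) u (f u - 1)) w

/-- The weak Roman domination number. -/
noncomputable def weakRomanNumber {α : Type*} (G : SimpleGraph α) [Fintype α] : ℕ :=
  sInf {k | ∃ f : α → ℕ, IsWRDF G f ∧ ∑ v, f v = k}

/-- A dominating set. -/
def IsDomSet {α : Type*} (G : SimpleGraph α) (D : Finset α) : Prop :=
  ∀ v ∉ D, ∃ u ∈ D, G.Adj u v

/-- The domination number. -/
noncomputable def domNumber {α : Type*} (G : SimpleGraph α) [Fintype α] : ℕ :=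
  sInf {k | ∃ D : Finset α, IsDomSet G D ∧ D.card = k}

/-- A total dominating set. -/
def IsTotalDomSet {α : Type*} (G : SimpleGraph α) (S : Finset α) : Prop :=
  ∀ v, ∃ u ∈ S, G.Adj u v

/-- The total domination number. -/
noncomputable def totalDomNumber {α : Type*} (G : SimpleGraph α) [Fintype α] : ℕ :=
  sInf {k | ∃ S : Finset α, IsTotalDomSet G S ∧ S.card = k}

/-- A double total dominating set: every vertex has at least two neighbours in `S`. -/
def IsDoubleTotalDomSet {α : Type*} (G : SimpleGraph α) (S : Finset α) : Prop :=
  ∀ v, ∃ u₁ ∈ S, ∃ u₂ ∈ S, u₁ ≠ u₂ ∧ G.Adj u₁ v ∧ G.Adj u₂ v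

/-- The double total domination number. -/
noncomputable def doubleTotalDomNumber {α : Type*} (G : SimpleGraph α) [Fintype α] : ℕ :=
  sInf {k | ∃ S : Finset α, IsDoubleTotalDomSet G S ∧ S.card = k}

/-- A 2-packing: the closed neighbourhoods of distinct members are disjoint. -/
def IsTwoPacking {α : Type*} (G : SimpleGraph α) (X : Finset α) : Prop :=
  ∀ u ∈ X, ∀ v ∈ X, u ≠ v →
    ∀ w, ¬ ((w = u ∨ G.Adj u w) ∧ (w = v ∨ G.Adj v w))

/-- The 2-packing number. -/
noncomputable def twoPackingNumber {α : Type*} (G : SimpleGraph α) [Fintype α] : ℕ :=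
  sSup {k | ∃ X : Finset α, IsTwoPacking G X ∧ X.card = k}

/-- A secure dominating set. -/
def IsSecureDomSet {α : Type*} (G : SimpleGraph α) (S : Finset α) : Prop :=
  IsDomSet G S ∧ ∀ v ∉ S, ∃ u ∈ S, G.Adj u v ∧ IsDomSet G (insert v (S.erase u))

/-- The secure domination number. -/
noncomputable def secureDomNumber {α : Type*} (G : SimpleGraph α) [Fintype α] : ℕ :=
  sInf {k | ∃ S : Finset α, IsSecureDomSet G S ∧ S.card = k}

/-- The corona product of two graphs. -/
def corona {α β : Type*} (G₁ : SimpleGraph α) (G₂ : SimpleGraph β) :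
    SimpleGraph (α ⊕ α × β) where
  Adj x y :=
    match x, y with
    | .inl a, .inl a' => G₁.Adj a a'
    | .inl a, .inr p => a = p.1
    | .inr p, .inl a => p.1 = a
    | .inr p, .inr q => p.1 = q.1 ∧ G₂.Adj p.2 q.2
  symm := by
    constructor
    rintro (a | p) (a' | q) h
    · exact G₁.adj_symm h
    · exact h.symm
    · exact h.symm
    · exact ⟨h.1.symm, G₂.adj_symm h.2⟩
  loopless := by
    constructor
    rintro (a | p) h
    · exact G₁.loopless.irrefl a h
    · exact G₂.loopless.irrefl p.2 h.2

/-!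
Put a copy of a minimum WRDF `f` of `H` on every fibre `{x} × H` with `x` in a minimum dominating
set `D` of `G`. A vertex over `D` is defended inside its own fibre, exactly as in `H`; a vertex over
`u ∉ D` sees the whole fibre over a neighbour `x ∈ D`. When a guard moves from `(x, y)` to
`(u, v)`, the fibre over `x` keeps weight `w(f) - 1 ≥ 1`, because a WRDF of a noncomplete graph
has weight at least `2`, and the fibre over `x` itself is defended by the guard now at `(u, v)`.
-/

open Function

section WeakRoman

variable {β : Type*} {H : SimpleGraph β} {f : β → ℕ}

noncomputable def moveGuard (f : β → ℕ) (u v : β) : β → ℕ :=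
  update (update f v 1) u (f u - 1)

def Defends (H : SimpleGraph β) (f : β → ℕ) (u v : β) : Prop :=
  H.Adj u v ∧ 1 ≤ f u ∧ ∀ w, ¬ Undefended H (moveGuard f u v) w

lemma IsWRDF.not_undefended (hf : IsWRDF H f) (z : β) : ¬ Undefended H f z := by
  rintro ⟨hz, hnbrs⟩
  obtain ⟨u, huz, hu, -⟩ := hf.2 z hz
  have := hnbrs u huz.symm
  omega

lemma add_le_sum_of_ne [Fintype β] {a b : β} (hab : a ≠ b) : f a + f b ≤ ∑ v, f v := by
  rw [← Finset.sum_pair hab]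
  exact Finset.sum_le_sum_of_subset (Finset.subset_univ _)

lemma IsWRDF.two_le_sum [Fintype β] (hf : IsWRDF H f) {a b : β} (hab : a ≠ b)
    (hnadj : ¬ H.Adj a b) : 2 ≤ ∑ v, f v := by
  by_contra! hsum
  wlog ha : f a = 0 generalizing a b
  · have hab' := add_le_sum_of_ne (f := f) hab
    exact this hab.symm (fun h => hnadj h.symm) (by omega)
  obtain ⟨u, hua, hu, hmove⟩ := hf.2 a ha
  have hub : u ≠ b := by rintro rfl; exact hnadj hua.symm
  have hfu : f u = 1 := by have := add_le_sum_of_ne (f := f) hub; omega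
  have hzero : ∀ z, z ≠ u → f z = 0 := fun z hz => by
    have := add_le_sum_of_ne (f := f) hz.symm; omega
  -- after the move the only guard stands on `a`, which does not see `b`
  refine hmove b ⟨?_, fun x hbx => ?_⟩
  · rw [update_of_ne hub.symm, update_of_ne hab.symm, hzero b hub.symm]
  · have hxa : x ≠ a := by rintro rfl; exact hnadj hbx.symm
    rcases eq_or_ne x u with rfl | hxu
    · rw [update_self, hfu]
    · rw [update_of_ne hxu, update_of_ne hxa, hzero x hxu]

lemma update_pred_ne_zero [Fintype β] (hf : 2 ≤ ∑ v, f v) (y : β) :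
    update f y (f y - 1) ≠ 0 := by
  intro h
  have hsum := congrArg (fun g : β → ℕ => ∑ v, g v) h
  simp only [Finset.sum_update_of_mem (Finset.mem_univ y), Pi.zero_apply,
    Finset.sum_const_zero] at hsum
  rw [Finset.sum_eq_add_sum_sdiff_singleton_of_mem (Finset.mem_univ y)] at hf
  omega

lemma ne_zero_of_two_le_sum [Fintype β] (hf : 2 ≤ ∑ v, f v) : f ≠ 0 := by
  rintro rfl
  simp at hf

end WeakRoman

section LexProd

variable {α β : Type*} {G : SimpleGraph α} {H : SimpleGraph β}

lemma not_undefended_lexProd_of_fiber {g : α × β → ℕ} {w : α} {z : β}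
    (h : ¬ Undefended H (curry g w) z) : ¬ Undefended (lexProd G H) g (w, z) :=
  fun ⟨hz, hnbrs⟩ => h ⟨hz, fun x hzx => hnbrs (w, x) (Or.inr ⟨rfl, hzx⟩)⟩

lemma not_undefended_lexProd_of_adj {g : α × β → ℕ} {w x : α} (hwx : G.Adj w x)
    (hx : curry g x ≠ 0) (z : β) : ¬ Undefended (lexProd G H) g (w, z) := by
  rintro ⟨-, hnbrs⟩
  exact hx (funext fun y => hnbrs (x, y) (Or.inl hwx))

noncomputable def onFibers (D : Finset α) (f : β → ℕ) : α × β → ℕ :=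
  fun p => if p.1 ∈ D then f p.2 else 0

variable {D : Finset α} {f : β → ℕ}

lemma curry_onFibers_of_mem {x : α} (hx : x ∈ D) : curry (onFibers D f) x = f :=
  funext fun _ => if_pos hx

lemma curry_onFibers_of_notMem {x : α} (hx : x ∉ D) : curry (onFibers D f) x = 0 :=
  funext fun _ => if_neg hx

lemma sum_onFibers [Fintype α] [Fintype β] :
    ∑ p, onFibers D f p = #D * ∑ v, f v := by
  simp only [onFibers, Fintype.sum_prod_type, Finset.sum_ite_irrel, Finset.sum_const_zero,
    Finset.sum_ite_mem, Finset.univ_inter, Finset.sum_const, smul_eq_mul]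

lemma curry_moveGuard_of_ne {F : α × β → ℕ} {q p : α × β} {w : α} (hq : w ≠ q.1)
    (hp : w ≠ p.1) : curry (moveGuard F q p) w = curry F w := by
  funext z
  simp [moveGuard, curry, Prod.ext_iff, hq, hp]

lemma curry_moveGuard_self (F : α × β → ℕ) (x : α) (y v : β) :
    curry (moveGuard F (x, y) (x, v)) x = moveGuard (curry F x) y v := by
  funext z
  simp [moveGuard, curry, update_apply]

lemma curry_moveGuard_source {F : α × β → ℕ} {x u : α} (hxu : x ≠ u) (y v : β) :
    curry (moveGuard F (x, y) (u, v)) x = update (curry F x) y (F (x, y) - 1) := by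
  funext z
  simp [moveGuard, curry, update_apply, hxu]

lemma curry_moveGuard_target {F : α × β → ℕ} {x u : α} (hxu : x ≠ u) (y v : β) :
    curry (moveGuard F (x, y) (u, v)) u = update (curry F u) v 1 := by
  funext z
  simp [moveGuard, curry, update_apply, hxu.symm]

lemma exists_defends_onFibers_of_mem (hD : IsDomSet G D) (hf : IsWRDF H f) (hf0 : f ≠ 0)
    {u : α} (hu : u ∈ D) {v : β} (hv : f v = 0) :
    ∃ q, Defends (lexProd G H) (onFibers D f) q (u, v) := by
  obtain ⟨y, hyv, hy, hmove⟩ := hf.2 v hv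
  have hFuy : onFibers D f (u, y) = f y := if_pos hu
  refine ⟨(u, y), Or.inr ⟨rfl, hyv⟩, hFuy ▸ hy, ?_⟩
  rintro ⟨w, z⟩
  by_cases hwu : w = u
  · subst hwu
    apply not_undefended_lexProd_of_fiber
    rw [curry_moveGuard_self, curry_onFibers_of_mem hu]
    exact hmove z
  by_cases hw : w ∈ D
  · apply not_undefended_lexProd_of_fiber
    rw [curry_moveGuard_of_ne hwu hwu, curry_onFibers_of_mem hw]
    exact hf.not_undefended z
  obtain ⟨x, hx, hxw⟩ := hD w hw
  refine not_undefended_lexProd_of_adj hxw.symm ?_ z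
  by_cases hxu : x = u
  · subst hxu
    rw [curry_moveGuard_self, curry_onFibers_of_mem hu]
    intro h
    simpa [moveGuard, hyv.ne'] using congrFun h v
  · rwa [curry_moveGuard_of_ne hxu hxu, curry_onFibers_of_mem hx]

lemma exists_defends_onFibers_of_notMem [Fintype β] (hD : IsDomSet G D) (hf : IsWRDF H f)
    (hf2 : 2 ≤ ∑ v, f v) {u : α} (hu : u ∉ D) (v : β) :
    ∃ q, Defends (lexProd G H) (onFibers D f) q (u, v) := by
  obtain ⟨x, hx, hxu⟩ := hD u hu
  obtain ⟨y, hy⟩ : ∃ y, f y ≠ 0 := Function.ne_iff.mp (ne_zero_of_two_le_sum hf2)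
  have hFxy : onFibers D f (x, y) = f y := if_pos hx
  have hxu' : x ≠ u := hxu.ne
  have hsource : curry (moveGuard (onFibers D f) (x, y) (u, v)) x ≠ 0 := by
    rw [curry_moveGuard_source hxu', curry_onFibers_of_mem hx, hFxy]
    exact update_pred_ne_zero hf2 y
  refine ⟨(x, y), Or.inl hxu, by omega, ?_⟩
  rintro ⟨w, z⟩
  by_cases hwu : w = u
  · subst hwu
    exact not_undefended_lexProd_of_adj hxu.symm hsource z
  by_cases hwx : w = x
  · subst hwx
    refine not_undefended_lexProd_of_adj hxu ?_ z
    rw [curry_moveGuard_target hxu', curry_onFibers_of_notMem hu]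
    intro h
    simpa using congrFun h v
  by_cases hw : w ∈ D
  · apply not_undefended_lexProd_of_fiber
    rw [curry_moveGuard_of_ne hwx hwu, curry_onFibers_of_mem hw]
    exact hf.not_undefended z
  obtain ⟨x', hx', hx'w⟩ := hD w hw
  refine not_undefended_lexProd_of_adj hx'w.symm ?_ z
  by_cases hx'x : x' = x
  · rwa [hx'x]
  · rw [curry_moveGuard_of_ne hx'x (ne_of_mem_of_not_mem hx' hu), curry_onFibers_of_mem hx']
    exact ne_zero_of_two_le_sum hf2

theorem isWRDF_lexProd_onFibers [Fintype β] (hD : IsDomSet G D) (hf : IsWRDF H f)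
    (hf2 : 2 ≤ ∑ v, f v) :
    IsWRDF (lexProd G H) (onFibers D f) := by
  refine ⟨fun p => ?_, fun ⟨u, v⟩ huv => ?_⟩
  · unfold onFibers
    split_ifs
    exacts [hf.1 p.2, zero_le_two]
  · by_cases hu : u ∈ D
    · exact exists_defends_onFibers_of_mem hD hf (ne_zero_of_two_le_sum hf2) hu
        (by rwa [onFibers, if_pos hu] at huv)
    · exact exists_defends_onFibers_of_notMem hD hf hf2 hu v

end LexProd

lemma weakRomanNumber_le {α : Type*} [Fintype α] {G : SimpleGraph α} {f : α → ℕ}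
    (hf : IsWRDF G f) : weakRomanNumber G ≤ ∑ v, f v :=
  Nat.sInf_le ⟨f, hf, rfl⟩

lemma exists_isWRDF_sum_eq_weakRomanNumber {α : Type*} [Fintype α] (G : SimpleGraph α) :
    ∃ f, IsWRDF G f ∧ ∑ v, f v = weakRomanNumber G :=
  Nat.sInf_mem (s := {k | ∃ f : α → ℕ, IsWRDF G f ∧ ∑ v, f v = k})
    ⟨_, fun _ => 1, ⟨fun _ => one_le_two, fun _ h => absurd h one_ne_zero⟩, rfl⟩

lemma exists_isDomSet_card_eq_domNumber {α : Type*} [Fintype α] (G : SimpleGraph α) :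
    ∃ D, IsDomSet G D ∧ #D = domNumber G :=
  Nat.sInf_mem (s := {k | ∃ D : Finset α, IsDomSet G D ∧ #D = k})
    ⟨_, Finset.univ, fun v hv => absurd (Finset.mem_univ v) hv, rfl⟩

/-- For any graph `G` and any noncomplete graph `H`,
`γ_r(G∘H) ≤ γ(G)·γ_r(H)`. -/
theorem weakRoman_lexProd_le_dom_mul_weakRoman {α β : Type*} [Fintype α] [Fintype β]
    (G : SimpleGraph α) (H : SimpleGraph β)
    (hH : ∃ a b : β, a ≠ b ∧ ¬ H.Adj a b) :
    weakRomanNumber (lexProd G H) ≤ domNumber G * weakRomanNumber H := by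
  obtain ⟨a, b, hab, hnadj⟩ := hH
  obtain ⟨D, hD, hDcard⟩ := exists_isDomSet_card_eq_domNumber G
  obtain ⟨f, hf, hfsum⟩ := exists_isWRDF_sum_eq_weakRomanNumber H
  calc weakRomanNumber (lexProd G H)
      ≤ ∑ p, onFibers D f p :=
        weakRomanNumber_le (isWRDF_lexProd_onFibers hD hf (hf.two_le_sum hab hnadj))
    _ = domNumber G * weakRomanNumber H := by rw [sum_onFibers, hDcard, hfsum]
end

section
/- For any connected graph G of order n ≥ 3 and any graph H, γ_r(G∘H) ≤ 2·⌊2n/3⌋. -/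
open Finset
open scoped Classical

/-! Putting weight `2` on every vertex of a total dominating set gives a weak Roman dominating
function: after a defender moves from `u` to a neighbour `v`, `u` keeps weight `1`, and every
vertex still has a neighbour of positive weight. A total dominating set `S` of `G` lifts to the
total dominating set `S × {b}` of `G ∘ H`, so it remains to find one with `3|S| ≤ 2n`.

For this, root a breadth-first spanning tree of `G` and let `w` be the grandparent of a deepest
vertex. Then `w` and the parents of its grandchildren totally dominate the subtree of `w` (two
levels deep) together with the parent of `w`, at the rate `2/3`; removing that subtree leaves a
rooted tree in which the parent of `w` need not be dominated, which is immediate when at most two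
vertices remain and follows by induction otherwise. -/

section WeakRoman
variable {γ : Type*} {K : SimpleGraph γ} {D : Finset γ}

lemma isWRDF_of_isTotalDomSet (hD : IsTotalDomSet K D) :
    IsWRDF K (fun x => if x ∈ D then 2 else 0) := by
  refine ⟨fun v => by by_cases h : v ∈ D <;> simp [h], fun v hv => ?_⟩
  have hvD : v ∉ D := by intro h; simp [h] at hv
  obtain ⟨u, huD, hadj⟩ := hD v
  refine ⟨u, hadj, by simp [huD], fun w hw => ?_⟩
  obtain ⟨t, htD, hwt⟩ := hD w
  have htv : t ≠ v := by rintro rfl; exact hvD htD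
  refine absurd (hw.2 t hwt.symm) ?_
  by_cases htu : t = u
  · subst htu; simp [htD]
  · simp [htu, htv, htD]

lemma weakRomanNumber_le_two_mul_card [Fintype γ] (hD : IsTotalDomSet K D) :
    weakRomanNumber K ≤ 2 * #D :=
  Nat.sInf_le ⟨_, isWRDF_of_isTotalDomSet hD, by simp [Finset.sum_ite_mem, mul_comm]⟩

end WeakRoman

lemma IsTotalDomSet.lexProd {α β : Type*} {G : SimpleGraph α} {S : Finset α}
    (hS : IsTotalDomSet G S) (H : SimpleGraph β) (b : β) :
    IsTotalDomSet (lexProd G H) (S ×ˢ {b}) := fun p => by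
  obtain ⟨s, hs, hadj⟩ := hS p.1
  exact ⟨(s, b), by simp [hs], Or.inl hadj⟩

lemma SimpleGraph.Connected.exists_adj_dist_eq_add_one {α : Type*} {G : SimpleGraph α}
    (hconn : G.Connected) (r : α) {v : α} (hv : v ≠ r) :
    ∃ u, G.Adj u v ∧ G.dist r v = G.dist r u + 1 := by
  obtain ⟨p, hp⟩ := hconn.exists_walk_length_eq_dist v r
  obtain ⟨u, hadj, q, rfl⟩ := SimpleGraph.Walk.exists_eq_cons_of_ne hv p
  have hq : G.dist u r ≤ q.length := SimpleGraph.dist_le q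
  have htri : G.dist v r ≤ G.dist v u + G.dist u r := hconn.dist_triangle
  rw [SimpleGraph.dist_eq_one_iff_adj.2 hadj] at htri
  rw [SimpleGraph.Walk.length_cons] at hp
  refine ⟨u, hadj.symm, ?_⟩
  rw [SimpleGraph.dist_comm, G.dist_comm (u := r)]
  omega

section RootedTree

variable {α : Type*}

/-- A spanning tree of `A` inside `G`, rooted at `r` and encoded by a parent map and a depth. -/
def IsRootedTree (G : SimpleGraph α) (r : α) (par : α → α) (dep : α → ℕ) (A : Finset α) :
    Prop :=
  r ∈ A ∧ dep r = 0 ∧ ∀ x ∈ A, x ≠ r → par x ∈ A ∧ G.Adj (par x) x ∧ dep x = dep (par x) + 1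

noncomputable def grandchildren (par : α → α) (dep : α → ℕ) (A : Finset α) (w : α) : Finset α :=
  A.filter fun x => dep x = dep w + 2 ∧ par (par x) = w

noncomputable def twoLevelSubtree (par : α → α) (dep : α → ℕ) (A : Finset α) (w : α) : Finset α :=
  A.filter fun x =>
    x = w ∨ (dep x = dep w + 1 ∧ par x = w) ∨ (dep x = dep w + 2 ∧ par (par x) = w)

namespace IsRootedTree

variable {G : SimpleGraph α} {r : α} {par : α → α} {dep : α → ℕ} {A : Finset α}

lemma parent_mem (hA : IsRootedTree G r par dep A) {x : α} (hx : x ∈ A) (hxr : x ≠ r) :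
    par x ∈ A :=
  (hA.2.2 x hx hxr).1

lemma adj_parent (hA : IsRootedTree G r par dep A) {x : α} (hx : x ∈ A) (hxr : x ≠ r) :
    G.Adj (par x) x :=
  (hA.2.2 x hx hxr).2.1

lemma dep_eq_parent_add_one (hA : IsRootedTree G r par dep A) {x : α} (hx : x ∈ A)
    (hxr : x ≠ r) : dep x = dep (par x) + 1 :=
  (hA.2.2 x hx hxr).2.2

lemma ne_root_of_dep_pos (hA : IsRootedTree G r par dep A) {x : α} (hx : 0 < dep x) : x ≠ r := by
  rintro rfl; rw [hA.2.1] at hx; exact hx.false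

lemma parent_eq_of_card_eq_two (hA : IsRootedTree G r par dep A) (h2 : #A = 2) {x y : α}
    (hx : x ∈ A) (hy : y ∈ A) (hxy : x ≠ y) (hxr : x ≠ r) : par x = y := by
  by_contra hpy
  have hpx : par x ≠ x := by
    intro h; have := hA.dep_eq_parent_add_one hx hxr; rw [h] at this; omega
  have hsub : ({par x, x, y} : Finset α) ⊆ A := by
    simp [Finset.insert_subset_iff, hx, hy, hA.parent_mem hx hxr]
  have := Finset.card_le_card hsub
  rw [Finset.card_insert_of_notMem (by simp [hpx, hpy]), Finset.card_pair hxy, h2] at this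
  omega

lemma adj_of_card_eq_two (hA : IsRootedTree G r par dep A) (h2 : #A = 2) {x y : α}
    (hx : x ∈ A) (hy : y ∈ A) (hxy : x ≠ y) : G.Adj x y := by
  by_cases hxr : x = r
  · have hyr : y ≠ r := hxr ▸ hxy.symm
    simpa [hA.parent_eq_of_card_eq_two h2 hy hx hxy.symm hyr] using hA.adj_parent hy hyr
  · simpa [hA.parent_eq_of_card_eq_two h2 hx hy hxy hxr] using (hA.adj_parent hx hxr).symm

lemma eq_root_of_dep_eq_zero (hA : IsRootedTree G r par dep A) {x : α} (hx : x ∈ A)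
    (h0 : dep x = 0) : x = r := by
  by_contra hxr; have := hA.dep_eq_parent_add_one hx hxr; omega

lemma exists_dominating_of_dep_le_one (hA : IsRootedTree G r par dep A) (h3 : 3 ≤ #A)
    (hdep : ∀ x ∈ A, dep x ≤ 1) :
    ∃ S ⊆ A, (∀ x ∈ A, ∃ s ∈ S, G.Adj s x) ∧ 3 * #S ≤ 2 * #A := by
  have parent_eq_root {x : α} (hx : x ∈ A) (hxr : x ≠ r) : par x = r :=
    hA.eq_root_of_dep_eq_zero (hA.parent_mem hx hxr)
      (by have := hA.dep_eq_parent_add_one hx hxr; have := hdep x hx; omega)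
  obtain ⟨c, hc, hcr⟩ : ∃ c ∈ A, c ≠ r := Finset.exists_mem_ne (by omega) r
  refine ⟨{r, c}, by simp [Finset.insert_subset_iff, hA.1, hc], fun x hx => ?_, ?_⟩
  · by_cases hxr : x = r
    · exact ⟨c, by simp, hxr ▸ parent_eq_root hc hcr ▸ (hA.adj_parent hc hcr).symm⟩
    · exact ⟨r, by simp, parent_eq_root hx hxr ▸ hA.adj_parent hx hxr⟩
  · have := Finset.card_le_two (a := r) (b := c)
    omega

variable {w : α}

lemma of_mem_image_grandchildren (hA : IsRootedTree G r par dep A) {y : α}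
    (hy : y ∈ (grandchildren par dep A w).image par) :
    y ∈ A ∧ dep y = dep w + 1 ∧ par y = w := by
  obtain ⟨x, hx, rfl⟩ := Finset.mem_image.1 hy
  obtain ⟨hxA, hdx, hpx⟩ := Finset.mem_filter.1 hx
  have hxr := hA.ne_root_of_dep_pos (x := x) (by omega)
  have := hA.dep_eq_parent_add_one hxA hxr
  exact ⟨hA.parent_mem hxA hxr, by omega, hpx⟩

/-- Each parent of a grandchild is paid for by itself and one of its children, and `w` by the
surplus of one such parent. -/
lemma three_mul_card_insert_image_grandchildren_le (hA : IsRootedTree G r par dep A) (hw : w ∈ A)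
    (hne : (grandchildren par dep A w).Nonempty) :
    3 * #(insert w ((grandchildren par dep A w).image par)) ≤
      2 * #(twoLevelSubtree par dep A w) := by
  set C := grandchildren par dep A w
  set M := C.image par
  have hM {y : α} (hy : y ∈ M) := hA.of_mem_image_grandchildren hy
  have hC {x : α} (hx : x ∈ C) := Finset.mem_filter.1 hx
  have hsub : insert w (M ∪ C) ⊆ twoLevelSubtree par dep A w := by
    intro x hx
    simp only [Finset.mem_insert, Finset.mem_union] at hx
    rcases hx with rfl | hx | hx
    · exact Finset.mem_filter.2 ⟨hw, Or.inl rfl⟩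
    · exact Finset.mem_filter.2 ⟨(hM hx).1, Or.inr (Or.inl (hM hx).2)⟩
    · exact Finset.mem_filter.2 ⟨(hC hx).1, Or.inr (Or.inr (hC hx).2)⟩
  have hdisj : Disjoint M C :=
    Finset.disjoint_left.2 fun x hxM hxC => by have := (hM hxM).2.1; have := (hC hxC).2.1; omega
  have hwMC : w ∉ M ∪ C := by
    simp only [Finset.mem_union, not_or]
    exact ⟨fun h => by have := (hM h).2.1; omega, fun h => by have := (hC h).2.1; omega⟩
  have hcard := Finset.card_le_card hsub
  rw [Finset.card_insert_of_notMem hwMC, Finset.card_union_of_disjoint hdisj] at hcard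
  have hMC : #M ≤ #C := Finset.card_image_le
  have hM1 : 1 ≤ #M := (hne.image par).card_pos
  have := Finset.card_insert_le w M
  omega

lemma exists_adj_of_mem_twoLevelSubtree (hA : IsRootedTree G r par dep A) {v : α}
    (hv : v ∈ grandchildren par dep A w) {x : α} (hx : x ∈ twoLevelSubtree par dep A w) :
    ∃ s ∈ insert w ((grandchildren par dep A w).image par), G.Adj s x := by
  obtain ⟨hxA, rfl | ⟨hdx, hpx⟩ | hgx⟩ := Finset.mem_filter.1 hx
  · obtain ⟨hpv, hdpv, hppv⟩ := hA.of_mem_image_grandchildren (Finset.mem_image_of_mem par hv)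
    refine ⟨par v, by simp [Finset.mem_image_of_mem par hv], ?_⟩
    exact (hppv ▸ hA.adj_parent hpv (hA.ne_root_of_dep_pos (by omega))).symm
  · exact ⟨w, by simp, hpx ▸ hA.adj_parent hxA (hA.ne_root_of_dep_pos (by omega))⟩
  · have hxC : x ∈ grandchildren par dep A w := Finset.mem_filter.2 ⟨hxA, hgx⟩
    refine ⟨par x, by simp [Finset.mem_image_of_mem par hxC], ?_⟩
    exact hA.adj_parent hxA (hA.ne_root_of_dep_pos (by omega))

lemma twoLevelSubtree_root (hA : IsRootedTree G r par dep A) (hmax : ∀ x ∈ A, dep x ≤ 2) :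
    twoLevelSubtree par dep A r = A := by
  refine Finset.filter_true_of_mem fun x hx => ?_
  by_cases hxr : x = r
  · exact Or.inl hxr
  have hpx := hA.parent_mem hx hxr
  have hdx := hA.dep_eq_parent_add_one hx hxr
  by_cases hpxr : par x = r
  · exact Or.inr (Or.inl ⟨by rw [hdx, hpxr], hpxr⟩)
  have hdpx := hA.dep_eq_parent_add_one hpx hpxr
  have h0 : dep (par (par x)) = 0 := by have := hmax x hx; omega
  have hppx := hA.eq_root_of_dep_eq_zero (hA.parent_mem hpx hpxr) h0
  exact Or.inr (Or.inr ⟨by rw [hA.2.1]; omega, hppx⟩)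

lemma sdiff_twoLevelSubtree (hA : IsRootedTree G r par dep A) (hwr : w ≠ r)
    (hmax : ∀ x ∈ A, dep x ≤ dep w + 2) :
    IsRootedTree G r par dep (A \ twoLevelSubtree par dep A w) := by
  have hrT : r ∉ twoLevelSubtree par dep A w := by
    simp [twoLevelSubtree, hA.2.1, Ne.symm hwr]
  refine ⟨Finset.mem_sdiff.2 ⟨hA.1, hrT⟩, hA.2.1, fun x hx hxr => ?_⟩
  obtain ⟨hxA, hxT⟩ := Finset.mem_sdiff.1 hx
  obtain ⟨hpx, hadj, hdx⟩ := hA.2.2 x hxA hxr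
  refine ⟨Finset.mem_sdiff.2 ⟨hpx, fun hpT => hxT ?_⟩, hadj, hdx⟩
  obtain ⟨-, hpw | ⟨hdp, hpp⟩ | ⟨hdp, -⟩⟩ := Finset.mem_filter.1 hpT
  · exact Finset.mem_filter.2 ⟨hxA, Or.inr (Or.inl ⟨by rw [hdx, hpw], hpw⟩)⟩
  · exact Finset.mem_filter.2 ⟨hxA, Or.inr (Or.inr ⟨by omega, hpp⟩)⟩
  · have := hmax x hxA; omega

lemma parent_mem_sdiff_twoLevelSubtree (hA : IsRootedTree G r par dep A) (hw : w ∈ A)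
    (hwr : w ≠ r) : par w ∈ A \ twoLevelSubtree par dep A w := by
  have hdw := hA.dep_eq_parent_add_one hw hwr
  refine Finset.mem_sdiff.2 ⟨hA.parent_mem hw hwr, fun hpT => ?_⟩
  obtain ⟨-, hpw | ⟨hdp, -⟩ | ⟨hdp, -⟩⟩ := Finset.mem_filter.1 hpT
  · rw [hpw] at hdw; omega
  · omega
  · omega

lemma exists_dominating_erase_of_card_le_two (hA : IsRootedTree G r par dep A) (h2 : #A ≤ 2)
    {p : α} (hp : p ∈ A) :
    ∃ S ⊆ A, (∀ x ∈ A, x ≠ p → ∃ s ∈ S, G.Adj s x) ∧ 3 * #S ≤ 2 * #A := by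
  by_cases hA2 : #A = 2
  · refine ⟨{p}, by simpa using hp, fun x hx hxp => ⟨p, by simp, ?_⟩, by simp [hA2]⟩
    exact hA.adj_of_card_eq_two hA2 hp hx (Ne.symm hxp)
  · refine ⟨∅, Finset.empty_subset _, fun x hx hxp => ?_, by simp⟩
    exact absurd (Finset.card_le_one.1 (by omega) x hx p hp) hxp

lemma insert_image_grandchildren_subset (hA : IsRootedTree G r par dep A) (hw : w ∈ A) :
    insert w ((grandchildren par dep A w).image par) ⊆ A :=
  Finset.insert_subset hw fun _ hy => (hA.of_mem_image_grandchildren hy).1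

lemma exists_dominating_of_sdiff_twoLevelSubtree (hA : IsRootedTree G r par dep A) (hw : w ∈ A)
    (hwr : w ≠ r) {v : α} (hv : v ∈ grandchildren par dep A w) {S' : Finset α}
    (hS'A : S' ⊆ A \ twoLevelSubtree par dep A w)
    (hS'dom : ∀ x ∈ A \ twoLevelSubtree par dep A w, x ≠ par w → ∃ s ∈ S', G.Adj s x)
    (hS'card : 3 * #S' ≤ 2 * #(A \ twoLevelSubtree par dep A w)) :
    ∃ S ⊆ A, (∀ x ∈ A, ∃ s ∈ S, G.Adj s x) ∧ 3 * #S ≤ 2 * #A := by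
  set T := twoLevelSubtree par dep A w
  set C := insert w ((grandchildren par dep A w).image par)
  have hCT : 3 * #C ≤ 2 * #T := hA.three_mul_card_insert_image_grandchildren_le hw ⟨v, hv⟩
  have hcardA : #(A \ T) + #T = #A :=
    Finset.card_sdiff_add_card_eq_card (Finset.filter_subset _ _)
  refine ⟨S' ∪ C, Finset.union_subset (hS'A.trans Finset.sdiff_subset)
    (hA.insert_image_grandchildren_subset hw), fun x hx => ?_, ?_⟩
  · by_cases hxT : x ∈ T
    · obtain ⟨s, hs, hsx⟩ := hA.exists_adj_of_mem_twoLevelSubtree hv hxT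
      exact ⟨s, Finset.mem_union_right _ hs, hsx⟩
    by_cases hxp : x = par w
    · exact ⟨w, by simp [C], hxp ▸ (hA.adj_parent hw hwr).symm⟩
    · obtain ⟨s, hs, hsx⟩ := hS'dom x (Finset.mem_sdiff.2 ⟨hx, hxT⟩) hxp
      exact ⟨s, Finset.mem_union_left _ hs, hsx⟩
  · have := Finset.card_union_le S' C
    omega

theorem exists_dominating_three_mul_card_le (hA : IsRootedTree G r par dep A) (h3 : 3 ≤ #A) :
    ∃ S ⊆ A, (∀ x ∈ A, ∃ s ∈ S, G.Adj s x) ∧ 3 * #S ≤ 2 * #A := by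
  induction hN : #A using Nat.strong_induction_on generalizing A with
  | _ N ih =>
  subst hN
  obtain ⟨v, hvA, hmax⟩ := A.exists_max_image dep ⟨r, hA.1⟩
  by_cases hv : dep v ≤ 1
  · exact hA.exists_dominating_of_dep_le_one h3 fun x hx => (hmax x hx).trans hv
  have hvr := hA.ne_root_of_dep_pos (x := v) (by omega)
  have hdv := hA.dep_eq_parent_add_one hvA hvr
  have hur := hA.ne_root_of_dep_pos (x := par v) (by omega)
  have hdu := hA.dep_eq_parent_add_one (hA.parent_mem hvA hvr) hur
  set w := par (par v)
  have hw : w ∈ A := hA.parent_mem (hA.parent_mem hvA hvr) hur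
  have hvC : v ∈ grandchildren par dep A w := Finset.mem_filter.2 ⟨hvA, by omega, rfl⟩
  have hmax' : ∀ x ∈ A, dep x ≤ dep w + 2 := fun x hx => by have := hmax x hx; omega
  by_cases hwr : w = r
  · have hTA : twoLevelSubtree par dep A w = A := by
      rw [hwr] at hmax' ⊢
      exact hA.twoLevelSubtree_root (by simpa [hA.2.1] using hmax')
    have hcard := hA.three_mul_card_insert_image_grandchildren_le hw ⟨v, hvC⟩
    rw [hTA] at hcard
    exact ⟨_, hA.insert_image_grandchildren_subset hw,
      fun x hx => hA.exists_adj_of_mem_twoLevelSubtree hvC (by rwa [hTA]), hcard⟩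
  set T := twoLevelSubtree par dep A w
  have hA' : IsRootedTree G r par dep (A \ T) := hA.sdiff_twoLevelSubtree hwr hmax'
  have hT : 0 < #T := Finset.card_pos.2 ⟨w, Finset.mem_filter.2 ⟨hw, Or.inl rfl⟩⟩
  have hcardA : #(A \ T) + #T = #A :=
    Finset.card_sdiff_add_card_eq_card (Finset.filter_subset _ _)
  -- `par w` is dominated by `w`, so the rest of the tree may leave it undominated.
  by_cases hsmall : #(A \ T) ≤ 2
  · obtain ⟨S', hS'A, hS'dom, hS'card⟩ := hA'.exists_dominating_erase_of_card_le_two hsmall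
      (hA.parent_mem_sdiff_twoLevelSubtree hw hwr)
    exact hA.exists_dominating_of_sdiff_twoLevelSubtree hw hwr hvC hS'A hS'dom hS'card
  · obtain ⟨S', hS'A, hS'dom, hS'card⟩ := ih _ (by omega) hA' (by omega) rfl
    exact hA.exists_dominating_of_sdiff_twoLevelSubtree hw hwr hvC hS'A
      (fun x hx _ => hS'dom x hx) hS'card

end IsRootedTree

end RootedTree

theorem SimpleGraph.Connected.exists_isTotalDomSet_three_mul_card_le {α : Type*} [Fintype α]
    {G : SimpleGraph α} (hconn : G.Connected) (h3 : 3 ≤ Fintype.card α) :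
    ∃ S : Finset α, IsTotalDomSet G S ∧ 3 * #S ≤ 2 * Fintype.card α := by
  obtain ⟨r⟩ := hconn.nonempty
  choose! par hpar using fun v (hv : v ≠ r) => hconn.exists_adj_dist_eq_add_one r hv
  have htree : IsRootedTree G r par (G.dist r) Finset.univ :=
    ⟨Finset.mem_univ r, SimpleGraph.dist_self,
      fun x _ hxr => ⟨Finset.mem_univ _, hpar x hxr⟩⟩
  obtain ⟨S, -, hS, hcard⟩ := htree.exists_dominating_three_mul_card_le (by rwa [Finset.card_univ])
  exact ⟨S, fun x => hS x (Finset.mem_univ x), by rwa [Finset.card_univ] at hcard⟩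

/-- For any connected graph `G` of order `n ≥ 3` and any graph `H`,
`γ_r(G∘H) ≤ 2·⌊2n/3⌋`. -/
theorem weakRoman_lexProd_le_two_mul_twoThirds {α β : Type*} [Fintype α] [Fintype β]
    (G : SimpleGraph α) (H : SimpleGraph β) (n : ℕ)
    (hcard : Fintype.card α = n) (hn : 3 ≤ n) (hconn : G.Connected) :
    weakRomanNumber (lexProd G H) ≤ 2 * (2 * n / 3) := by
  subst hcard
  obtain ⟨S, hS, hcardS⟩ := hconn.exists_isTotalDomSet_three_mul_card_le hn
  obtain ⟨D, hD, hDS⟩ : ∃ D : Finset (α × β), IsTotalDomSet (lexProd G H) D ∧ #D ≤ #S := by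
    cases isEmpty_or_nonempty β with
    | inl _ => exact ⟨∅, fun p => isEmptyElim p.2, by simp⟩
    | inr hβ => exact ⟨S ×ˢ {hβ.some}, hS.lexProd H hβ.some, by simp⟩
  calc weakRomanNumber (lexProd G H) ≤ 2 * #D := weakRomanNumber_le_two_mul_card hD
    _ ≤ 2 * (2 * Fintype.card α / 3) := by omega
end
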